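/- Let i in {1,2} and let j be the other index, let p in Z², and let M and M' be distinct perfect matchings of the infinite grid graph on Z^2 that agree on every edge not having both of its endpoints in the vertex set V₂ = {p + a·e_i + b·e_j : a in {0,1,2}, b in {0,1}} spanned by the two adjacent plaquettes p and p + e_i. Let h be a height function of M and h' a height function of M', normalized so that h' − h vanishes outside a finite set of plaquettes (possible since M and M' agree on all but finitely many edges). Then the total height change ∑_x (h'(x) − h(x)) lies in {−8, −4, 4, 8}; in particular it is nonzero, so no nontrivial rearrangement of dimers supported on two adjacent plaquettes conserves the total height. -/

import Mathlib

/-!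
Dimer configurations (perfect matchings) on the infinite square grid `ℤ × ℤ` and their
height functions.

* A vertex is a point of `ℤ × ℤ`; the grid edge `(v, i)` joins `v` and `v + e i`, where
  `e 0 = (1,0)` and `e 1 = (0,1)`.
* A plaquette is a point `p : ℤ × ℤ`, regarded as the unit square with corners
  `p, p+e 0, p+e 1, p+e 0+e 1`.
* A height function for a perfect matching `M` assigns an integer to every plaquette so that
  crossing a grid edge, keeping the even endpoint of that edge on the right, the height
  increases by `1` across an unoccupied edge and decreases by `3` across an occupied one.
-/

open scoped Classical
noncomputable section

namespace HQDM

/-- Vertices (and also plaquettes) of the infinite grid. -/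
abbrev V : Type := ℤ × ℤ

/-- Grid edges: `(v, i)` is the edge joining `v` and `v + e i`. -/
abbrev E : Type := V × Fin 2

/-- The two unit vectors. -/
def e : Fin 2 → V := fun i => if i = 0 then (1, 0) else (0, 1)

/-- The endpoints of an edge. -/
def ends (ed : E) : Set V := {ed.1, ed.1 + e ed.2}

/-- `M` is a perfect matching of the grid graph: every vertex lies on exactly one edge of `M`. -/
def IsPM (M : Set E) : Prop := ∀ w : V, ∃! ed : E, ed ∈ M ∧ w ∈ ends ed

/-- Sign of a vertex: `1` on even vertices, `-1` on odd ones. -/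
def eps (v : V) : ℤ := if Even (v.1 + v.2) then 1 else -1

/-- `h : ℤ × ℤ → ℤ` is a height function for the matching `M`.  The two conditions encode, for
the horizontal edge `(v, 0)` (separating plaquette `v` above from plaquette `v - (0,1)` below)
and the vertical edge `(v, 1)` (separating plaquette `v` on the right from plaquette `v - (1,0)`
on the left), the rule: crossing a grid edge keeping its even endpoint on the right, the height
changes by `+1` across an unoccupied edge and by `-3` across an occupied one. -/
def IsHeight (M : Set E) (h : V → ℤ) : Prop :=
  ∀ v : V,
    h (v - (0, 1)) - h v = (if (v, (0 : Fin 2)) ∈ M then (-3 : ℤ) else 1) * eps v ∧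
    h (v - (1, 0)) - h v = (if (v, (1 : Fin 2)) ∈ M then (3 : ℤ) else -1) * eps v

/-- Plaquette `p` hosts a horizontal parallel dimer pair in `M`. -/
def HostsH (M : Set E) (p : V) : Prop :=
  (p, (0 : Fin 2)) ∈ M ∧ (p + (0, 1), (0 : Fin 2)) ∈ M

/-- Plaquette `p` hosts a vertical parallel dimer pair in `M`. -/
def HostsV (M : Set E) (p : V) : Prop :=
  (p, (1 : Fin 2)) ∈ M ∧ (p + (1, 0), (1 : Fin 2)) ∈ M

/-- Plaquette `p` hosts a parallel pair (horizontal or vertical); i.e. `p` is flippable. -/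
def HostsPar (M : Set E) (p : V) : Prop := HostsH M p ∨ HostsV M p

/-- The four boundary edges of the plaquette `p`. -/
def plaqEdges (p : V) : Set E :=
  {(p, (0 : Fin 2)), (p + (0, 1), (0 : Fin 2)), (p, (1 : Fin 2)), (p + (1, 0), (1 : Fin 2))}

/-- Flipping the plaquette `p`: the horizontal pair is replaced by the vertical one, or
vice versa (as a set operation, the symmetric difference with the plaquette's boundary). -/
def flip (M : Set E) (p : V) : Set E := symmDiff M (plaqEdges p)

/-- `{p, p + 2 e i}` is a flippable pair of `M`: one of the two plaquettes hosts a horizontal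
pair and the other a vertical pair. -/
def FlipPair (M : Set E) (p : V) (i : Fin 2) : Prop :=
  (HostsH M p ∧ HostsV M (p + e i + e i)) ∨ (HostsV M p ∧ HostsH M (p + e i + e i))

/-- The hQDM move at the pair `{p, p + 2 e i}`: both plaquettes are flipped. -/
def move (M : Set E) (p : V) (i : Fin 2) : Set E :=
  symmDiff M (plaqEdges p ∪ plaqEdges (p + e i + e i))

end HQDM

namespace HQDM

/-- The vertex set spanned by the row of plaquettes `p, p + e i, …, p + amax • e i`
(two rows of vertices in the `j` direction). -/
def block (p : V) (i j : Fin 2) (amax : ℕ) : Set V :=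
  {v : V | ∃ a b : ℕ, a ≤ amax ∧ b ≤ 1 ∧ v = p + a • e i + b • e j}

lemma key (a b : Prop) [Decidable a] [Decidable b] (u w ε x y : ℤ)
    (huw : u - w = 4 ∨ u - w = -4) (hε : ε = 1 ∨ ε = -1)
    (heq : x - y = ((if a then u else w) - (if b then u else w)) * ε) :
    (x - y = 0 ∨ x - y = 4 ∨ x - y = -4) ∧ (x - y = 0 → (a ↔ b)) := by
  by_cases ha : a <;> by_cases hb : b <;> simp [ha, hb] at heq ⊢ <;>
    rcases huw with h|h <;> rcases hε with rfl|rfl <;> omega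

lemma eps_cases (v : V) : eps v = 1 ∨ eps v = -1 := by
  unfold eps; split <;> simp

lemma ray_zero (g : V → ℤ) (hfin : {x : V | g x ≠ 0}.Finite) (f : ℕ → V)
    (hinj : Function.Injective f) (hstep : ∀ n, g (f (n+1)) = g (f n)) : g (f 0) = 0 := by
  by_contra hv
  have hconst : ∀ n : ℕ, g (f n) = g (f 0) := by
    intro n; induction n with
    | zero => rfl
    | succ k ih => rw [hstep k, ih]
  have hsub : Set.range f ⊆ {x : V | g x ≠ 0} := by
    rintro _ ⟨n, rfl⟩; simp only [Set.mem_setOf_eq, hconst n]; exact hv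
  exact (Set.infinite_range_of_injective hinj).mono hsub hfin

lemma mem_block_h (p v : V) : v ∈ block p 0 1 2 ↔
    p.1 ≤ v.1 ∧ v.1 ≤ p.1 + 2 ∧ p.2 ≤ v.2 ∧ v.2 ≤ p.2 + 1 := by
  constructor
  · rintro ⟨a, b, ha, hb, rfl⟩; simp [e, Prod.ext_iff]; omega
  · rintro ⟨h1, h2, h3, h4⟩
    exact ⟨(v.1 - p.1).toNat, (v.2 - p.2).toNat, by omega, by omega, by
      simp [e, Prod.ext_iff]; omega⟩

lemma mem_block_v (p v : V) : v ∈ block p 1 0 2 ↔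
    p.1 ≤ v.1 ∧ v.1 ≤ p.1 + 1 ∧ p.2 ≤ v.2 ∧ v.2 ≤ p.2 + 2 := by
  constructor
  · rintro ⟨a, b, ha, hb, rfl⟩; simp [e, Prod.ext_iff]; omega
  · rintro ⟨h1, h2, h3, h4⟩
    exact ⟨(v.2 - p.2).toNat, (v.1 - p.1).toNat, by omega, by omega, by
      simp [e, Prod.ext_iff]; omega⟩

section
variable {M M' : Set E} {h h' : V → ℤ}

lemma gstep0 (hh : IsHeight M h) (hh' : IsHeight M' h') (v : V) :
    (h' (v - (0,1)) - h (v - (0,1))) - (h' v - h v)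
      = ((if (v, (0 : Fin 2)) ∈ M' then (-3 : ℤ) else 1)
          - (if (v, (0 : Fin 2)) ∈ M then (-3 : ℤ) else 1)) * eps v := by
  have h1 := (hh v).1
  have h2 := (hh' v).1
  ring_nf; ring_nf at h1 h2; linarith

lemma gstep1 (hh : IsHeight M h) (hh' : IsHeight M' h') (v : V) :
    (h' (v - (1,0)) - h (v - (1,0))) - (h' v - h v)
      = ((if (v, (1 : Fin 2)) ∈ M' then (3 : ℤ) else -1)
          - (if (v, (1 : Fin 2)) ∈ M then (3 : ℤ) else -1)) * eps v := by
  have h1 := (hh v).2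
  have h2 := (hh' v).2
  ring_nf; ring_nf at h1 h2; linarith

lemma gsame0 (hh : IsHeight M h) (hh' : IsHeight M' h') (v : V)
    (hiff : (v, (0 : Fin 2)) ∈ M ↔ (v, (0 : Fin 2)) ∈ M') :
    h' (v - (0,1)) - h (v - (0,1)) = h' v - h v := by
  have hst := gstep0 hh hh' v
  have he : ((v, (0 : Fin 2)) ∈ M') = ((v, (0 : Fin 2)) ∈ M) := propext hiff.symm
  rw [he] at hst; simp at hst; linarith

lemma gsame1 (hh : IsHeight M h) (hh' : IsHeight M' h') (v : V)
    (hiff : (v, (1 : Fin 2)) ∈ M ↔ (v, (1 : Fin 2)) ∈ M') :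
    h' (v - (1,0)) - h (v - (1,0)) = h' v - h v := by
  have hst := gstep1 hh hh' v
  have he : ((v, (1 : Fin 2)) ∈ M') = ((v, (1 : Fin 2)) ∈ M) := propext hiff.symm
  rw [he] at hst; simp at hst; linarith

set_option maxHeartbeats 1000000 in
lemma main0 (p : V) (hne : M ≠ M')
    (hagree : ∀ ed : E, ¬(ed.1 ∈ block p 0 1 2 ∧ ed.1 + e ed.2 ∈ block p 0 1 2) →
      (ed ∈ M ↔ ed ∈ M'))
    (hh : IsHeight M h) (hh' : IsHeight M' h')
    (hfin : {x : V | h' x ≠ h x}.Finite) :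
    (∑ᶠ x : V, (h' x - h x)) ∈ ({-8, -4, 4, 8} : Set ℤ) := by
  obtain ⟨px, py⟩ := p
  have hfin' : {x : V | h' x - h x ≠ 0}.Finite := by simpa [sub_ne_zero] using hfin
  -- support lemma
  have hsupp : ∀ q : V, q ≠ (px, py) → q ≠ (px + 1, py) → h' q - h q = 0 := by
    rintro ⟨x, y⟩ hq1 hq2
    by_cases hup : py + 1 ≤ y
    · have := ray_zero (fun v => h' v - h v) hfin' (fun n => (x, y + n))
        (by intro a b hab; simp [Prod.ext_iff] at hab; omega)
        (by
          intro n
          have hiff : ((x, y + ((n : ℤ) + 1)), (0 : Fin 2)) ∈ M ↔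
              ((x, y + ((n : ℤ) + 1)), (0 : Fin 2)) ∈ M' := by
            apply hagree
            rintro ⟨hc1, -⟩
            rw [mem_block_h] at hc1
            simp at hc1
            omega
          have hk := gsame0 hh hh' (x, y + ((n : ℤ) + 1)) hiff
          have e1 : ((x, y + ((n : ℤ) + 1)) : V) - (0, 1) = (x, y + (n : ℤ)) := by
            simp [Prod.ext_iff]; ring
          rw [e1] at hk
          push_cast
          exact hk.symm)
      simpa using this
    by_cases hdn : y ≤ py - 1
    · have := ray_zero (fun v => h' v - h v) hfin' (fun n => (x, y - n))
        (by intro a b hab; simp [Prod.ext_iff] at hab; omega)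
        (by
          intro n
          have hiff : ((x, y - (n : ℤ)), (0 : Fin 2)) ∈ M ↔
              ((x, y - (n : ℤ)), (0 : Fin 2)) ∈ M' := by
            apply hagree
            rintro ⟨hc1, -⟩
            rw [mem_block_h] at hc1
            simp at hc1
            omega
          have hk := gsame0 hh hh' (x, y - (n : ℤ)) hiff
          have e1 : ((x, y - (n : ℤ)) : V) - (0, 1) = (x, y - ((n : ℤ) + 1)) := by
            simp [Prod.ext_iff]; ring
          rw [e1] at hk
          push_cast
          exact hk)
      simpa using this
    by_cases hrt : px + 2 ≤ x
    · have := ray_zero (fun v => h' v - h v) hfin' (fun n => (x + n, y))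
        (by intro a b hab; simp [Prod.ext_iff] at hab; omega)
        (by
          intro n
          have hiff : ((x + ((n : ℤ) + 1), y), (1 : Fin 2)) ∈ M ↔
              ((x + ((n : ℤ) + 1), y), (1 : Fin 2)) ∈ M' := by
            apply hagree
            rintro ⟨hc1, -⟩
            rw [mem_block_h] at hc1
            simp at hc1
            omega
          have hk := gsame1 hh hh' (x + ((n : ℤ) + 1), y) hiff
          have e1 : ((x + ((n : ℤ) + 1), y) : V) - (1, 0) = (x + (n : ℤ), y) := by
            simp [Prod.ext_iff]; ring
          rw [e1] at hk
          push_cast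
          exact hk.symm)
      simpa using this
    by_cases hlf : x ≤ px - 1
    · have := ray_zero (fun v => h' v - h v) hfin' (fun n => (x - n, y))
        (by intro a b hab; simp [Prod.ext_iff] at hab; omega)
        (by
          intro n
          have hiff : ((x - (n : ℤ), y), (1 : Fin 2)) ∈ M ↔
              ((x - (n : ℤ), y), (1 : Fin 2)) ∈ M' := by
            apply hagree
            rintro ⟨hc1, -⟩
            rw [mem_block_h] at hc1
            simp at hc1
            omega
          have hk := gsame1 hh hh' (x - (n : ℤ), y) hiff
          have e1 : ((x - (n : ℤ), y) : V) - (1, 0) = (x - ((n : ℤ) + 1), y) := by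
            simp [Prod.ext_iff]; ring
          rw [e1] at hk
          push_cast
          exact hk)
      simpa using this
    · exfalso
      simp [Prod.ext_iff] at hq1 hq2
      omega
  -- the seven relations
  have z1 : h' ((px : ℤ), py - 1) - h (px, py - 1) = 0 :=
    hsupp _ (by intro hc; simp [Prod.ext_iff] at hc; try omega) (by intro hc; simp [Prod.ext_iff] at hc; try omega)
  have z2 : h' ((px : ℤ), py + 1) - h (px, py + 1) = 0 :=
    hsupp _ (by intro hc; simp [Prod.ext_iff] at hc; try omega) (by intro hc; simp [Prod.ext_iff] at hc; try omega)
  have z3 : h' ((px : ℤ) + 1, py - 1) - h (px + 1, py - 1) = 0 :=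
    hsupp _ (by intro hc; simp [Prod.ext_iff] at hc; try omega) (by intro hc; simp [Prod.ext_iff] at hc; try omega)
  have z4 : h' ((px : ℤ) + 1, py + 1) - h (px + 1, py + 1) = 0 :=
    hsupp _ (by intro hc; simp [Prod.ext_iff] at hc; try omega) (by intro hc; simp [Prod.ext_iff] at hc; try omega)
  have z5 : h' ((px : ℤ) - 1, py) - h (px - 1, py) = 0 :=
    hsupp _ (by intro hc; simp [Prod.ext_iff] at hc; try omega) (by intro hc; simp [Prod.ext_iff] at hc; try omega)
  have z7 : h' ((px : ℤ) + 2, py) - h (px + 2, py) = 0 :=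
    hsupp _ (by intro hc; simp [Prod.ext_iff] at hc; try omega) (by intro hc; simp [Prod.ext_iff] at hc; try omega)
  have R1 := gstep0 hh hh' (px, py)
  rw [show (((px : ℤ), py) : V) - (0,1) = (px, py - 1) by simp [Prod.ext_iff]; try omega, z1] at R1
  obtain ⟨k1, i1⟩ := key _ _ _ _ _ _ _ (Or.inr (by norm_num)) (eps_cases _) R1
  have R2 := gstep0 hh hh' (px, py + 1)
  rw [show (((px : ℤ), py + 1) : V) - (0,1) = (px, py) by simp [Prod.ext_iff]; try omega, z2] at R2
  obtain ⟨k2, i2⟩ := key _ _ _ _ _ _ _ (Or.inr (by norm_num)) (eps_cases _) R2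
  have R3 := gstep0 hh hh' (px + 1, py)
  rw [show (((px : ℤ) + 1, py) : V) - (0,1) = (px + 1, py - 1) by simp [Prod.ext_iff]; try omega, z3] at R3
  obtain ⟨k3, i3⟩ := key _ _ _ _ _ _ _ (Or.inr (by norm_num)) (eps_cases _) R3
  have R4 := gstep0 hh hh' (px + 1, py + 1)
  rw [show (((px : ℤ) + 1, py + 1) : V) - (0,1) = (px + 1, py) by simp [Prod.ext_iff]; try omega, z4] at R4
  obtain ⟨k4, i4⟩ := key _ _ _ _ _ _ _ (Or.inr (by norm_num)) (eps_cases _) R4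
  have R5 := gstep1 hh hh' (px, py)
  rw [show (((px : ℤ), py) : V) - (1,0) = (px - 1, py) by simp [Prod.ext_iff]; try omega, z5] at R5
  obtain ⟨k5, i5⟩ := key _ _ _ _ _ _ _ (Or.inl (by norm_num)) (eps_cases _) R5
  have R6 := gstep1 hh hh' (px + 1, py)
  rw [show (((px : ℤ) + 1, py) : V) - (1,0) = (px, py) by simp [Prod.ext_iff]; try omega] at R6
  obtain ⟨k6, i6⟩ := key _ _ _ _ _ _ _ (Or.inl (by norm_num)) (eps_cases _) R6
  have R7 := gstep1 hh hh' (px + 2, py)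
  rw [show (((px : ℤ) + 2, py) : V) - (1,0) = (px + 1, py) by simp [Prod.ext_iff]; try omega] at R7
  obtain ⟨k7, i7⟩ := key _ _ _ _ _ _ _ (Or.inl (by norm_num)) (eps_cases _) R7
  -- exclude A = B = 0
  have hABne : ¬(h' ((px : ℤ), py) - h (px, py) = 0 ∧ h' ((px : ℤ) + 1, py) - h (px + 1, py) = 0) := by
    rintro ⟨hA0, hB0⟩
    apply hne
    ext ⟨⟨vx, vy⟩, k⟩
    by_cases hint : ((vx, vy) : V) ∈ block (px, py) 0 1 2 ∧
        ((vx, vy) : V) + e k ∈ block (px, py) 0 1 2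
    · fin_cases k
      · obtain ⟨hc1, hc2⟩ := hint
        rw [mem_block_h] at hc1 hc2
        simp [e] at hc1 hc2
        have hx : vx = px ∨ vx = px + 1 := by omega
        have hy : vy = py ∨ vy = py + 1 := by omega
        rcases hx with rfl | rfl <;> rcases hy with rfl | rfl
        · exact (i1 (by omega)).symm
        · exact (i2 (by omega)).symm
        · exact (i3 (by omega)).symm
        · exact (i4 (by omega)).symm
      · obtain ⟨hc1, hc2⟩ := hint
        rw [mem_block_h] at hc1 hc2
        simp [e] at hc1 hc2
        have hx : vx = px ∨ vx = px + 1 ∨ vx = px + 2 := by omega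
        have hy : vy = py := by omega
        subst hy
        rcases hx with rfl | rfl | rfl
        · exact (i5 (by omega)).symm
        · exact (i6 (by omega)).symm
        · exact (i7 (by omega)).symm
    · exact hagree _ hint
  -- the total sum
  have hsum : (∑ᶠ x : V, (h' x - h x)) = (h' ((px : ℤ), py) - h (px, py)) + (h' ((px : ℤ) + 1, py) - h (px + 1, py)) := by
    have hss : (Function.support fun x : V => h' x - h x) ⊆
        (({((px : ℤ), py), ((px : ℤ) + 1, py)} : Finset V) : Set V) := by
      intro q hq
      by_contra hq'
      simp only [Finset.coe_insert, Finset.coe_singleton, Set.mem_insert_iff,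
        Set.mem_singleton_iff, not_or] at hq'
      exact hq (hsupp q hq'.1 hq'.2)
    rw [finsum_eq_finset_sum_of_support_subset _ hss,
      Finset.sum_pair (by simp [Prod.ext_iff])]
  rw [hsum]
  simp only [Set.mem_insert_iff, Set.mem_singleton_iff]
  clear R1 R2 R3 R4 R5 R6 R7 i1 i2 i3 i4 i5 i6 i7 hagree hh hh' hfin hfin' hsupp hsum hne
  omega
set_option maxHeartbeats 1000000 in
lemma main1 (p : V) (hne : M ≠ M')
    (hagree : ∀ ed : E, ¬(ed.1 ∈ block p 1 0 2 ∧ ed.1 + e ed.2 ∈ block p 1 0 2) →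
      (ed ∈ M ↔ ed ∈ M'))
    (hh : IsHeight M h) (hh' : IsHeight M' h')
    (hfin : {x : V | h' x ≠ h x}.Finite) :
    (∑ᶠ x : V, (h' x - h x)) ∈ ({-8, -4, 4, 8} : Set ℤ) := by
  obtain ⟨px, py⟩ := p
  have hfin' : {x : V | h' x - h x ≠ 0}.Finite := by simpa [sub_ne_zero] using hfin
  -- support lemma
  have hsupp : ∀ q : V, q ≠ (px, py) → q ≠ (px, py + 1) → h' q - h q = 0 := by
    rintro ⟨x, y⟩ hq1 hq2
    by_cases hrt : px + 1 ≤ x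
    · have := ray_zero (fun v => h' v - h v) hfin' (fun n => (x + n, y))
        (by intro a b hab; simp [Prod.ext_iff] at hab; omega)
        (by
          intro n
          have hiff : ((x + ((n : ℤ) + 1), y), (1 : Fin 2)) ∈ M ↔
              ((x + ((n : ℤ) + 1), y), (1 : Fin 2)) ∈ M' := by
            apply hagree
            rintro ⟨hc1, -⟩
            rw [mem_block_v] at hc1
            simp at hc1
            omega
          have hk := gsame1 hh hh' (x + ((n : ℤ) + 1), y) hiff
          have e1 : ((x + ((n : ℤ) + 1), y) : V) - (1, 0) = (x + (n : ℤ), y) := by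
            simp [Prod.ext_iff]; ring
          rw [e1] at hk
          push_cast
          exact hk.symm)
      simpa using this
    by_cases hlf : x ≤ px - 1
    · have := ray_zero (fun v => h' v - h v) hfin' (fun n => (x - n, y))
        (by intro a b hab; simp [Prod.ext_iff] at hab; omega)
        (by
          intro n
          have hiff : ((x - (n : ℤ), y), (1 : Fin 2)) ∈ M ↔
              ((x - (n : ℤ), y), (1 : Fin 2)) ∈ M' := by
            apply hagree
            rintro ⟨hc1, -⟩
            rw [mem_block_v] at hc1
            simp at hc1
            omega
          have hk := gsame1 hh hh' (x - (n : ℤ), y) hiff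
          have e1 : ((x - (n : ℤ), y) : V) - (1, 0) = (x - ((n : ℤ) + 1), y) := by
            simp [Prod.ext_iff]; ring
          rw [e1] at hk
          push_cast
          exact hk)
      simpa using this
    by_cases hup : py + 2 ≤ y
    · have := ray_zero (fun v => h' v - h v) hfin' (fun n => (x, y + n))
        (by intro a b hab; simp [Prod.ext_iff] at hab; omega)
        (by
          intro n
          have hiff : ((x, y + ((n : ℤ) + 1)), (0 : Fin 2)) ∈ M ↔
              ((x, y + ((n : ℤ) + 1)), (0 : Fin 2)) ∈ M' := by
            apply hagree
            rintro ⟨hc1, -⟩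
            rw [mem_block_v] at hc1
            simp at hc1
            omega
          have hk := gsame0 hh hh' (x, y + ((n : ℤ) + 1)) hiff
          have e1 : ((x, y + ((n : ℤ) + 1)) : V) - (0, 1) = (x, y + (n : ℤ)) := by
            simp [Prod.ext_iff]; ring
          rw [e1] at hk
          push_cast
          exact hk.symm)
      simpa using this
    by_cases hdn : y ≤ py - 1
    · have := ray_zero (fun v => h' v - h v) hfin' (fun n => (x, y - n))
        (by intro a b hab; simp [Prod.ext_iff] at hab; omega)
        (by
          intro n
          have hiff : ((x, y - (n : ℤ)), (0 : Fin 2)) ∈ M ↔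
              ((x, y - (n : ℤ)), (0 : Fin 2)) ∈ M' := by
            apply hagree
            rintro ⟨hc1, -⟩
            rw [mem_block_v] at hc1
            simp at hc1
            omega
          have hk := gsame0 hh hh' (x, y - (n : ℤ)) hiff
          have e1 : ((x, y - (n : ℤ)) : V) - (0, 1) = (x, y - ((n : ℤ) + 1)) := by
            simp [Prod.ext_iff]; ring
          rw [e1] at hk
          push_cast
          exact hk)
      simpa using this
    · exfalso
      simp [Prod.ext_iff] at hq1 hq2
      omega
  -- zeros around the two plaquettes
  have z1 : h' ((px : ℤ), py - 1) - h (px, py - 1) = 0 :=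
    hsupp _ (by intro hc; simp [Prod.ext_iff] at hc; try omega) (by intro hc; simp [Prod.ext_iff] at hc; try omega)
  have z2 : h' ((px : ℤ), py + 2) - h (px, py + 2) = 0 :=
    hsupp _ (by intro hc; simp [Prod.ext_iff] at hc; try omega) (by intro hc; simp [Prod.ext_iff] at hc; try omega)
  have z3 : h' ((px : ℤ) - 1, py) - h (px - 1, py) = 0 :=
    hsupp _ (by intro hc; simp [Prod.ext_iff] at hc; try omega) (by intro hc; simp [Prod.ext_iff] at hc; try omega)
  have z4 : h' ((px : ℤ) - 1, py + 1) - h (px - 1, py + 1) = 0 :=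
    hsupp _ (by intro hc; simp [Prod.ext_iff] at hc; try omega) (by intro hc; simp [Prod.ext_iff] at hc; try omega)
  have z5 : h' ((px : ℤ) + 1, py) - h (px + 1, py) = 0 :=
    hsupp _ (by intro hc; simp [Prod.ext_iff] at hc; try omega) (by intro hc; simp [Prod.ext_iff] at hc; try omega)
  have z6 : h' ((px : ℤ) + 1, py + 1) - h (px + 1, py + 1) = 0 :=
    hsupp _ (by intro hc; simp [Prod.ext_iff] at hc; try omega) (by intro hc; simp [Prod.ext_iff] at hc; try omega)
  -- the seven relations
  have R1 := gstep0 hh hh' (px, py)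
  rw [show (((px : ℤ), py) : V) - (0,1) = (px, py - 1) by simp [Prod.ext_iff]; try omega, z1] at R1
  obtain ⟨k1, i1⟩ := key _ _ _ _ _ _ _ (Or.inr (by norm_num)) (eps_cases _) R1
  have R2 := gstep0 hh hh' (px, py + 1)
  rw [show (((px : ℤ), py + 1) : V) - (0,1) = (px, py) by simp [Prod.ext_iff]; try omega] at R2
  obtain ⟨k2, i2⟩ := key _ _ _ _ _ _ _ (Or.inr (by norm_num)) (eps_cases _) R2
  have R3 := gstep0 hh hh' (px, py + 2)
  rw [show (((px : ℤ), py + 2) : V) - (0,1) = (px, py + 1) by simp [Prod.ext_iff]; try omega, z2] at R3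
  obtain ⟨k3, i3⟩ := key _ _ _ _ _ _ _ (Or.inr (by norm_num)) (eps_cases _) R3
  have R4 := gstep1 hh hh' (px, py)
  rw [show (((px : ℤ), py) : V) - (1,0) = (px - 1, py) by simp [Prod.ext_iff]; try omega, z3] at R4
  obtain ⟨k4, i4⟩ := key _ _ _ _ _ _ _ (Or.inl (by norm_num)) (eps_cases _) R4
  have R5 := gstep1 hh hh' (px + 1, py)
  rw [show (((px : ℤ) + 1, py) : V) - (1,0) = (px, py) by simp [Prod.ext_iff]; try omega, z5] at R5
  obtain ⟨k5, i5⟩ := key _ _ _ _ _ _ _ (Or.inl (by norm_num)) (eps_cases _) R5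
  have R6 := gstep1 hh hh' (px, py + 1)
  rw [show (((px : ℤ), py + 1) : V) - (1,0) = (px - 1, py + 1) by simp [Prod.ext_iff]; try omega, z4] at R6
  obtain ⟨k6, i6⟩ := key _ _ _ _ _ _ _ (Or.inl (by norm_num)) (eps_cases _) R6
  have R7 := gstep1 hh hh' (px + 1, py + 1)
  rw [show (((px : ℤ) + 1, py + 1) : V) - (1,0) = (px, py + 1) by simp [Prod.ext_iff]; try omega, z6] at R7
  obtain ⟨k7, i7⟩ := key _ _ _ _ _ _ _ (Or.inl (by norm_num)) (eps_cases _) R7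
  -- exclude A = B = 0
  have hABne : ¬(h' ((px : ℤ), py) - h (px, py) = 0 ∧ h' ((px : ℤ), py + 1) - h (px, py + 1) = 0) := by
    rintro ⟨hA0, hB0⟩
    apply hne
    ext ⟨⟨vx, vy⟩, k⟩
    by_cases hint : ((vx, vy) : V) ∈ block (px, py) 1 0 2 ∧
        ((vx, vy) : V) + e k ∈ block (px, py) 1 0 2
    · fin_cases k
      · obtain ⟨hc1, hc2⟩ := hint
        rw [mem_block_v] at hc1 hc2
        simp [e] at hc1 hc2
        have hx : vx = px := by omega
        have hy : vy = py ∨ vy = py + 1 ∨ vy = py + 2 := by omega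
        subst hx
        rcases hy with rfl | rfl | rfl
        · exact (i1 (by omega)).symm
        · exact (i2 (by omega)).symm
        · exact (i3 (by omega)).symm
      · obtain ⟨hc1, hc2⟩ := hint
        rw [mem_block_v] at hc1 hc2
        simp [e] at hc1 hc2
        have hx : vx = px ∨ vx = px + 1 := by omega
        have hy : vy = py ∨ vy = py + 1 := by omega
        rcases hx with rfl | rfl <;> rcases hy with rfl | rfl
        · exact (i4 (by omega)).symm
        · exact (i6 (by omega)).symm
        · exact (i5 (by omega)).symm
        · exact (i7 (by omega)).symm
    · exact hagree _ hint
  -- the total sum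
  have hsum : (∑ᶠ x : V, (h' x - h x)) = (h' ((px : ℤ), py) - h (px, py)) + (h' ((px : ℤ), py + 1) - h (px, py + 1)) := by
    have hss : (Function.support fun x : V => h' x - h x) ⊆
        (({((px : ℤ), py), ((px : ℤ), py + 1)} : Finset V) : Set V) := by
      intro q hq
      by_contra hq'
      simp only [Finset.coe_insert, Finset.coe_singleton, Set.mem_insert_iff,
        Set.mem_singleton_iff, not_or] at hq'
      exact hq (hsupp q hq'.1 hq'.2)
    rw [finsum_eq_finset_sum_of_support_subset _ hss,
      Finset.sum_pair (by simp [Prod.ext_iff])]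
  rw [hsum]
  simp only [Set.mem_insert_iff, Set.mem_singleton_iff]
  clear R1 R2 R3 R4 R5 R6 R7 i1 i2 i3 i4 i5 i6 i7 hagree hh hh' hfin hfin' hsupp hsum hne
  omega

end

/-- If two distinct perfect matchings `M, M'` agree on every edge not having
both endpoints in the vertex set spanned by the two adjacent plaquettes `p` and `p + e i`, then
the (normalized) total height change between them lies in `{-8, -4, 4, 8}`; in particular it is
nonzero, so no nontrivial rearrangement of dimers supported on two adjacent plaquettes conserves
the total height. -/
theorem no_height_conserving_move_on_two_adjacent_plaquettes (i j : Fin 2) (hij : i ≠ j)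
    (p : V) (M M' : Set E) (hM : IsPM M) (hM' : IsPM M') (hne : M ≠ M')
    (hagree : ∀ ed : E, ¬(ed.1 ∈ block p i j 2 ∧ ed.1 + e ed.2 ∈ block p i j 2) →
      (ed ∈ M ↔ ed ∈ M'))
    (h h' : V → ℤ) (hh : IsHeight M h) (hh' : IsHeight M' h')
    (hfin : {x : V | h' x ≠ h x}.Finite) :
    (∑ᶠ x : V, (h' x - h x)) ∈ ({-8, -4, 4, 8} : Set ℤ) := by
  fin_cases i <;> fin_cases j
  · exact absurd rfl hij
  · exact main0 p hne hagree hh hh' hfin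
  · exact main1 p hne hagree hh hh' hfin
  · exact absurd rfl hij

end HQDM
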